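/- Let K be a field, n ≥ 1, and f, g ∈ M_n(K((t))) two n×n matrices of Laurent series. Let π : K((t))^n → K((t))^n be the componentwise K-linear projection onto K[[t]]^n replacing all coefficients in negative degrees by 0, and let m_f, m_g denote the multiplication operators by f and g on column vectors in K((t))^n. Set u := π ∘ m_g ∘ m_f − m_g ∘ π ∘ m_f. Then there exist integers a ≤ b such that u vanishes on t^b K[[t]]^n and the image of u is contained in t^a K[[t]]^n; moreover, for any such a and b, u induces an endomorphism of the finite-dimensional K-vector space t^a K[[t]]^n / t^b K[[t]]^n, and the trace of this induced endomorphism equals Res(Tr(f·g′)), the coefficient of t^{−1} in the trace of the matrix f·g′. -/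

import Mathlib

/-- The formal derivative of a Laurent series: the coefficient of `t^n` in `f'` is
`(n+1)` times the coefficient of `t^(n+1)` in `f`. -/
noncomputable def lder {K : Type*} [Field K] (f : LaurentSeries K) : LaurentSeries K where
  coeff n := (n + 1 : ℤ) • f.coeff (n + 1)
  isPWO_support' := by
    have hmono : Monotone (fun m : ℤ => m - 1) := fun a b hab => by simpa using hab
    have h : (Function.support fun n : ℤ => (n + 1 : ℤ) • f.coeff (n + 1)) ⊆
        (fun m : ℤ => m - 1) '' (Function.support f.coeff) := by
      intro n hn
      refine ⟨n + 1, fun h0 => ?_, by ring⟩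
      simp [Function.mem_support, h0] at hn
    exact (f.isPWO_support'.image_of_monotoneOn (hmono.monotoneOn _)).mono h

/-- Truncation of a Laurent series to nonnegative degrees. -/
noncomputable def trunc {K : Type*} [Field K] (f : LaurentSeries K) : LaurentSeries K where
  coeff m := if 0 ≤ m then f.coeff m else 0
  isPWO_support' := f.isPWO_support'.mono (fun m hm => by
    simp only [Function.mem_support] at hm ⊢
    intro h0
    apply hm
    split_ifs <;> simp [h0])

@[simp] lemma trunc_coeff {K : Type*} [Field K] (f : LaurentSeries K) (m : ℤ) :
    (trunc f).coeff m = if 0 ≤ m then f.coeff m else 0 := rfl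

/-- The projection of `K((t))` onto `K[[t]]` replacing all coefficients in negative
degrees by `0`, as a `K`-linear map. -/
noncomputable def piPlus (K : Type*) [Field K] :
    LaurentSeries K →ₗ[K] LaurentSeries K where
  toFun := trunc
  map_add' f g := by
    apply HahnSeries.ext
    funext m
    simp only [trunc_coeff, HahnSeries.coeff_add]
    split_ifs <;> simp
  map_smul' c f := by
    apply HahnSeries.ext
    funext m
    simp only [trunc_coeff, HahnSeries.coeff_smul, RingHom.id_apply]
    split_ifs <;> simp

/-- The componentwise projection of `K((t))ⁿ` onto `K[[t]]ⁿ`. -/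
noncomputable def piPlusVec (K : Type*) [Field K] (n : ℕ) :
    (Fin n → LaurentSeries K) →ₗ[K] (Fin n → LaurentSeries K) :=
  LinearMap.pi fun i => (piPlus K).comp (LinearMap.proj i)

/-- Multiplication of column vectors by a fixed square matrix of Laurent series, as a
`K`-linear operator on `K((t))ⁿ`. -/
noncomputable def mulVecK {K : Type*} [Field K] {n : ℕ}
    (A : Matrix (Fin n) (Fin n) (LaurentSeries K)) :
    (Fin n → LaurentSeries K) →ₗ[K] (Fin n → LaurentSeries K) where
  toFun v := A.mulVec v
  map_add' a b := by
    funext i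
    simp [Matrix.mulVec, dotProduct, mul_add, Finset.sum_add_distrib]
  map_smul' c a := by
    funext i
    simp only [Matrix.mulVec, dotProduct, RingHom.id_apply, Pi.smul_apply,
      ← HahnSeries.C_mul_eq_smul, Finset.mul_sum]
    exact Finset.sum_congr rfl fun j _ => by ring

/-- The lattice `t^a K[[t]] ⊆ K((t))`, as a `K`-subspace. -/
def latticeAbove (K : Type*) [Field K] (a : ℤ) : Submodule K (LaurentSeries K) where
  carrier := {h : LaurentSeries K | ∀ m : ℤ, m < a → h.coeff m = 0}
  add_mem' := by
    intro x y hx hy m hm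
    simp [HahnSeries.coeff_add, hx m hm, hy m hm]
  zero_mem' := by intro m hm; simp
  smul_mem' := by
    intro c x hx m hm
    simp [HahnSeries.coeff_smul, hx m hm]

/-- The lattice `t^a K[[t]]ⁿ ⊆ K((t))ⁿ`. -/
def latticeAboveVec (K : Type*) [Field K] (n : ℕ) (a : ℤ) :
    Submodule K (Fin n → LaurentSeries K) :=
  Submodule.pi Set.univ fun _ => latticeAbove K a

/-- The standard quotient-by-submodule construction, registered for subspaces of
`K((t))ⁿ` (instance search struggles to find it unaided here). -/
noncomputable instance latticeVecQuotient {L : Type*} [Field L] {n : ℕ}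
    (W : Submodule L (Fin n → LaurentSeries L)) :
    HasQuotient (↥W) (Submodule L ↥W) := Submodule.hasQuotient

/-! In the monomial basis `eᵢ tᵐ` (`a ≤ m < b`) of `t^a K[[t]]ⁿ / t^b K[[t]]ⁿ` the trace of the
induced map is the sum of the diagonal coefficients of `u`, and the hypotheses on `a, b` make
these vanish outside `[a, b)`, so the window may be widened at will. The diagonal coefficient
splits entrywise: for `x ↦ π(P Q x) − P π(Q x)` at `tᵐ` it is `∑ₖ ([0 ≤ m] − [k ≤ m]) Pₖ Q₋ₖ`.
Summed over a window containing `0` and every relevant `k`, the bracket counts `k` exactly `k`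
times, leaving `∑ₖ k Pₖ Q₋ₖ = Res(Q P′)`. -/

open Finset Matrix

theorem LaurentSeries.coeff_mul_eq_sum {R : Type*} [Semiring R] (P Q : LaurentSeries R) (d : ℤ)
    {s : Finset ℤ} (hs : ∀ k ∉ s, P.coeff k * Q.coeff (d - k) = 0) :
    (P * Q).coeff d = ∑ k ∈ s, P.coeff k * Q.coeff (d - k) := by
  rw [HahnSeries.coeff_mul]
  refine sum_bij_ne_zero (fun ij _ _ => ij.1) (fun ij hij hne => ?_)
    (fun ij hij _ ij' hij' _ h => ?_) (fun k _ hne => ?_) (fun ij hij _ => ?_)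
  · rw [Finset.mem_antidiagonal] at hij
    by_contra hk
    exact hne (by rw [← hs _ hk, ← hij.2.2]; simp)
  · rw [Finset.mem_antidiagonal] at hij hij'
    ext
    · exact h
    · linarith [hij.2.2, hij'.2.2]
  · refine ⟨(k, d - k), ?_, ?_, rfl⟩
    · rw [Finset.mem_antidiagonal]
      exact ⟨left_ne_zero_of_mul hne, right_ne_zero_of_mul hne, by omega⟩
    · exact hne
  · rw [Finset.mem_antidiagonal] at hij
    simp [← hij.2.2]

section Lattices

variable {K : Type*} [Field K]

theorem mem_latticeAbove_iff_le_orderTop {c : ℤ} {x : LaurentSeries K} :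
    x ∈ latticeAbove K c ↔ (c : WithTop ℤ) ≤ x.orderTop := by
  rw [HahnSeries.le_orderTop_iff_forall]
  simp only [WithTop.coe_lt_coe]
  rfl

theorem latticeAbove_antitone : Antitone (latticeAbove K) :=
  fun _ _ hcd _ hx m hm => hx m (hm.trans_le hcd)

theorem mem_latticeAbove_order (x : LaurentSeries K) : x ∈ latticeAbove K x.order :=
  fun _ => HahnSeries.coeff_eq_zero_of_lt_order

theorem mul_mem_latticeAbove {c d : ℤ} {x y : LaurentSeries K} (hx : x ∈ latticeAbove K c)
    (hy : y ∈ latticeAbove K d) : x * y ∈ latticeAbove K (c + d) := by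
  rw [mem_latticeAbove_iff_le_orderTop] at hx hy ⊢
  exact (WithTop.coe_add c d ▸ add_le_add hx hy).trans HahnSeries.orderTop_add_le_mul

theorem exists_le_forall_mem_latticeAbove {ι : Type*} [Finite ι] (F : ι → LaurentSeries K)
    (c₀ : ℤ) : ∃ c ≤ c₀, ∀ i, F i ∈ latticeAbove K c := by
  obtain ⟨c, hc⟩ := Finite.exists_ge fun i => (F i).order
  exact ⟨min c c₀, min_le_right _ _, fun i =>
    latticeAbove_antitone ((min_le_left _ _).trans (hc i)) (mem_latticeAbove_order (F i))⟩

variable {n : ℕ}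

theorem mem_latticeAboveVec {c : ℤ} {v : Fin n → LaurentSeries K} :
    v ∈ latticeAboveVec K n c ↔ ∀ i, v i ∈ latticeAbove K c := by
  simp [latticeAboveVec, Submodule.mem_pi]

theorem latticeAboveVec_antitone : Antitone (latticeAboveVec K n) := fun _ _ hcd _ hv =>
  mem_latticeAboveVec.2 fun i => latticeAbove_antitone hcd (mem_latticeAboveVec.1 hv i)

theorem mulVec_mem_latticeAboveVec {A : Matrix (Fin n) (Fin n) (LaurentSeries K)} {c d : ℤ}
    {v : Fin n → LaurentSeries K} (hA : ∀ i j, A i j ∈ latticeAbove K c)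
    (hv : v ∈ latticeAboveVec K n d) : A *ᵥ v ∈ latticeAboveVec K n (c + d) :=
  mem_latticeAboveVec.2 fun i =>
    Submodule.sum_mem _ fun j _ => mul_mem_latticeAbove (hA i j) (mem_latticeAboveVec.1 hv j)

theorem piPlusVec_apply (v : Fin n → LaurentSeries K) (i : Fin n) :
    piPlusVec K n v i = trunc (v i) := rfl

theorem piPlusVec_mem_latticeAboveVec_zero (v : Fin n → LaurentSeries K) :
    piPlusVec K n v ∈ latticeAboveVec K n 0 :=
  mem_latticeAboveVec.2 fun i m hm => by simp [piPlusVec_apply, hm.not_ge]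

theorem piPlusVec_eq_self {v : Fin n → LaurentSeries K} (hv : v ∈ latticeAboveVec K n 0) :
    piPlusVec K n v = v := by
  funext i
  ext m
  rw [piPlusVec_apply, trunc_coeff, ite_eq_left_iff, not_le]
  exact fun hm => (mem_latticeAboveVec.1 hv i m hm).symm

end Lattices

section TateOperator

variable {K : Type*} [Field K] {n : ℕ}

noncomputable def tateOperator (f g : Matrix (Fin n) (Fin n) (LaurentSeries K)) :
    (Fin n → LaurentSeries K) →ₗ[K] (Fin n → LaurentSeries K) :=
  piPlusVec K n ∘ₗ mulVecK g ∘ₗ mulVecK f - mulVecK g ∘ₗ piPlusVec K n ∘ₗ mulVecK f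

variable {f g : Matrix (Fin n) (Fin n) (LaurentSeries K)}

theorem tateOperator_apply (v : Fin n → LaurentSeries K) :
    tateOperator f g v = piPlusVec K n (g *ᵥ f *ᵥ v) - g *ᵥ piPlusVec K n (f *ᵥ v) := rfl

theorem tateOperator_eq_zero_of_mem {b c d : ℤ} (hf : ∀ i j, f i j ∈ latticeAbove K c)
    (hg : ∀ i j, g i j ∈ latticeAbove K d) (hfb : 0 ≤ c + b) (hgfb : 0 ≤ d + (c + b))
    {v : Fin n → LaurentSeries K} (hv : v ∈ latticeAboveVec K n b) :
    tateOperator f g v = 0 := by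
  have hfv : f *ᵥ v ∈ latticeAboveVec K n (c + b) := mulVec_mem_latticeAboveVec hf hv
  have hgfv := mulVec_mem_latticeAboveVec hg hfv
  rw [tateOperator_apply, piPlusVec_eq_self (latticeAboveVec_antitone hgfb hgfv),
    piPlusVec_eq_self (latticeAboveVec_antitone hfb hfv), sub_self]

theorem tateOperator_mem {d : ℤ} (hg : ∀ i j, g i j ∈ latticeAbove K d) (hd : d ≤ 0)
    (v : Fin n → LaurentSeries K) : tateOperator f g v ∈ latticeAboveVec K n d := by
  rw [tateOperator_apply]
  refine sub_mem (latticeAboveVec_antitone hd (piPlusVec_mem_latticeAboveVec_zero _)) ?_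
  simpa using mulVec_mem_latticeAboveVec hg (piPlusVec_mem_latticeAboveVec_zero (f *ᵥ v))

end TateOperator

section Residue

variable {K : Type*} [Field K]

theorem lder_coeff (P : LaurentSeries K) (k : ℤ) :
    (lder P).coeff k = (k + 1) • P.coeff (k + 1) := rfl

noncomputable def tateDiag (P Q : LaurentSeries K) (m : ℤ) : K :=
  (trunc (P * (Q * HahnSeries.single m 1)) - P * trunc (Q * HahnSeries.single m 1)).coeff m

theorem coeff_trunc_mul_single (Q : LaurentSeries K) (m j : ℤ) :
    (trunc (Q * HahnSeries.single m 1)).coeff j = if 0 ≤ j then Q.coeff (j - m) else 0 := by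
  simp [HahnSeries.coeff_mul_single]

theorem tateDiag_eq_sum {A B : ℤ} {P Q : LaurentSeries K} (hP : P ∈ latticeAbove K A)
    (hQ : Q ∈ latticeAbove K (1 - B)) (m : ℤ) :
    tateDiag P Q m = ∑ k ∈ Ico A B, ((if 0 ≤ m then P.coeff k * Q.coeff (-k) else 0) -
      if k ≤ m then P.coeff k * Q.coeff (-k) else 0) := by
  have hPQ : ∀ k ∉ Ico A B, P.coeff k * Q.coeff (-k) = 0 := by
    intro k hk
    rcases lt_or_ge k A with hkA | hAk
    · rw [hP k hkA, zero_mul]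
    · rw [hQ (-k) (by simp at hk; omega), mul_zero]
  have hfull : (P * (Q * HahnSeries.single m 1)).coeff m =
      ∑ k ∈ Ico A B, P.coeff k * Q.coeff (-k) := by
    rw [← mul_assoc, HahnSeries.coeff_mul_single, sub_self, mul_one,
      LaurentSeries.coeff_mul_eq_sum _ _ 0 (s := Ico A B) fun k hk => zero_sub k ▸ hPQ k hk]
    simp only [zero_sub]
  have htrunc : (P * trunc (Q * HahnSeries.single m 1)).coeff m =
      ∑ k ∈ Ico A B, if k ≤ m then P.coeff k * Q.coeff (-k) else 0 := by
    have hterm : ∀ k, P.coeff k * (trunc (Q * HahnSeries.single m 1)).coeff (m - k) =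
        if k ≤ m then P.coeff k * Q.coeff (-k) else 0 := by
      intro k
      simp only [coeff_trunc_mul_single, sub_sub_cancel_left, sub_nonneg, mul_ite, mul_zero]
    rw [LaurentSeries.coeff_mul_eq_sum _ _ m (s := Ico A B) fun k hk => by
      rw [hterm, hPQ k hk, ite_self]]
    exact sum_congr rfl fun k _ => hterm k
  rw [tateDiag, HahnSeries.coeff_sub, trunc_coeff, hfull, htrunc, sum_sub_distrib]
  split_ifs <;> simp

theorem sum_Ico_ite_le_sub_ite_le {M : Type*} [AddCommGroup M] (x : M) {A B j k : ℤ}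
    (hj : A ≤ j) (hk : A ≤ k) (hjB : j ≤ B) (hkB : k ≤ B) :
    ∑ m ∈ Ico A B, ((if j ≤ m then x else 0) - if k ≤ m then x else 0) = (k - j) • x := by
  have hcount : ∀ i, A ≤ i → i ≤ B → ∑ m ∈ Ico A B, (if i ≤ m then x else 0) = (B - i) • x := by
    intro i hAi hiB
    rw [← sum_filter, sum_const, ← natCast_zsmul]
    congr 1
    have : (Ico A B).filter (i ≤ ·) = Ico i B := by ext m; simp; omega
    rw [this, Int.card_Ico]
    omega
  rw [sum_sub_distrib, hcount j hj hjB, hcount k hk hkB, ← sub_smul]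
  congr 1
  ring

theorem sum_tateDiag {A B : ℤ} {P Q : LaurentSeries K} (hP : P ∈ latticeAbove K A)
    (hQ : Q ∈ latticeAbove K (1 - B)) (hA : A ≤ 0) (hB : 0 ≤ B) :
    ∑ m ∈ Ico A B, tateDiag P Q m = (Q * lder P).coeff (-1) := by
  have hlder : (lder P * Q).coeff (-1) =
      ∑ k ∈ Ico (A + -1) (B + -1), (lder P).coeff k * Q.coeff (-1 - k) := by
    refine LaurentSeries.coeff_mul_eq_sum _ _ _ fun k hk => ?_
    rcases lt_or_ge k (A + -1) with hkA | hAk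
    · rw [lder_coeff, hP (k + 1) (by omega), smul_zero, zero_mul]
    · rw [hQ (-1 - k) (by simp at hk; omega), mul_zero]
  calc ∑ m ∈ Ico A B, tateDiag P Q m
      = ∑ k ∈ Ico A B, ∑ m ∈ Ico A B, ((if 0 ≤ m then P.coeff k * Q.coeff (-k) else 0) -
          if k ≤ m then P.coeff k * Q.coeff (-k) else 0) := by
        rw [sum_congr rfl fun m _ => tateDiag_eq_sum hP hQ m, sum_comm]
    _ = ∑ k ∈ Ico A B, k • (P.coeff k * Q.coeff (-k)) := sum_congr rfl fun k hk => by
        rw [mem_Ico] at hk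
        simpa using sum_Ico_ite_le_sub_ite_le (P.coeff k * Q.coeff (-k)) hA hk.1 hB hk.2.le
    _ = (Q * lder P).coeff (-1) := by
        rw [mul_comm, hlder, ← sum_Ico_add']
        refine sum_congr rfl fun k _ => ?_
        rw [lder_coeff]
        ring_nf

end Residue

section Window

variable {K : Type*} [Field K] {n : ℕ}

noncomputable def monomialVec (i : Fin n) (m : ℤ) : Fin n → LaurentSeries K :=
  Pi.single i (HahnSeries.single m 1)

theorem monomialVec_mem_latticeAboveVec {a m : ℤ} (h : a ≤ m) (i : Fin n) :
    monomialVec (K := K) i m ∈ latticeAboveVec K n a := by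
  refine mem_latticeAboveVec.2 fun j k hk => ?_
  rw [monomialVec, Pi.single_apply]
  split_ifs
  · exact HahnSeries.coeff_single_of_ne (by omega)
  · rfl

variable (a b : ℤ)

noncomputable def windowCoeffs : latticeAboveVec K n a →ₗ[K] (Ico a b × Fin n → K) where
  toFun v p := (v.1 p.2).coeff p.1
  map_add' _ _ := rfl
  map_smul' _ _ := rfl

theorem ker_windowCoeffs :
    LinearMap.ker (windowCoeffs (K := K) (n := n) a b) =
      (latticeAboveVec K n b).comap (latticeAboveVec K n a).subtype := by
  ext v
  simp only [LinearMap.mem_ker, Submodule.mem_comap, Submodule.coe_subtype, mem_latticeAboveVec]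
  constructor
  · intro hv i m hm
    rcases lt_or_ge m a with hma | ham
    · exact mem_latticeAboveVec.1 v.2 i m hma
    · exact congrFun hv (⟨m, mem_Ico.2 ⟨ham, hm⟩⟩, i)
  · intro hv
    funext p
    exact hv p.2 p.1 (mem_Ico.1 p.1.2).2

theorem windowCoeffs_monomialVec (p : Ico a b × Fin n) :
    windowCoeffs a b ⟨monomialVec p.2 p.1,
      monomialVec_mem_latticeAboveVec (mem_Ico.1 p.1.2).1 p.2⟩ = Pi.single p (1 : K) := by
  funext q
  simp only [windowCoeffs, LinearMap.coe_mk, AddHom.coe_mk, monomialVec, Pi.single_apply,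
    Prod.ext_iff, Subtype.ext_iff]
  split_ifs <;> simp_all [eq_comm]

theorem windowCoeffs_surjective : Function.Surjective (windowCoeffs (K := K) (n := n) a b) := by
  rw [← LinearMap.range_eq_top, eq_top_iff, ← (Pi.basisFun K _).span_eq, Submodule.span_le]
  rintro _ ⟨p, rfl⟩
  exact ⟨_, by rw [Pi.basisFun_apply, windowCoeffs_monomialVec]⟩

noncomputable def windowEquiv :
    (latticeAboveVec K n a ⧸ (latticeAboveVec K n b).comap (latticeAboveVec K n a).subtype)
      ≃ₗ[K] (Ico a b × Fin n → K) :=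
  (Submodule.quotEquivOfEq _ _ (ker_windowCoeffs a b).symm).trans
    (LinearMap.quotKerEquivOfSurjective _ (windowCoeffs_surjective a b))

theorem windowEquiv_mk (v : latticeAboveVec K n a) :
    windowEquiv a b (Submodule.Quotient.mk v) = windowCoeffs a b v := rfl

variable {a b} (u : (Fin n → LaurentSeries K) →ₗ[K] (Fin n → LaurentSeries K))

theorem sum_Ico_diag_eq_of_le (ha : ∀ v, u v ∈ latticeAboveVec K n a)
    (hb : ∀ v ∈ latticeAboveVec K n b, u v = 0) {A B : ℤ} (hA : A ≤ a) (hB : b ≤ B) :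
    ∑ m ∈ Ico a b, ∑ i, (u (monomialVec i m) i).coeff m =
      ∑ m ∈ Ico A B, ∑ i, (u (monomialVec i m) i).coeff m := by
  refine sum_subset (Ico_subset_Ico hA hB) fun m _ hm => sum_eq_zero fun i _ => ?_
  rcases lt_or_ge m a with hma | ham
  · exact mem_latticeAboveVec.1 (ha _) i m hma
  · rw [hb _ (monomialVec_mem_latticeAboveVec
      (not_lt.1 fun hmb => hm (mem_Ico.2 ⟨ham, hmb⟩)) i), Pi.zero_apply,
      HahnSeries.coeff_zero]

variable (ha : ∀ v, u v ∈ latticeAboveVec K n a) (hb : ∀ v ∈ latticeAboveVec K n b, u v = 0)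

noncomputable def windowMap :
    (latticeAboveVec K n a ⧸ (latticeAboveVec K n b).comap (latticeAboveVec K n a).subtype) →ₗ[K]
      (latticeAboveVec K n a ⧸ (latticeAboveVec K n b).comap (latticeAboveVec K n a).subtype) :=
  Submodule.mapQ _ _ (u.restrict fun v _ => ha v) fun v hv =>
    show u v ∈ latticeAboveVec K n b from (hb v hv).symm ▸ zero_mem _

theorem windowMap_mk (v : latticeAboveVec K n a) :
    windowMap u ha hb (Submodule.Quotient.mk v) = Submodule.Quotient.mk ⟨u v, ha v⟩ := rfl

theorem trace_windowMap :
    LinearMap.trace K _ (windowMap u ha hb) =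
      ∑ m ∈ Ico a b, ∑ i, (u (monomialVec i m) i).coeff m := by
  set E := windowEquiv (K := K) (n := n) a b
  rw [← LinearMap.trace_conj' _ E, ← Matrix.toLin'_toMatrix' (E.conj (windowMap u ha hb)),
    Matrix.trace_toLin'_eq, ← sum_coe_sort (Ico a b), ← Fintype.sum_prod_type', Matrix.trace]
  refine Fintype.sum_congr _ _ fun p => ?_
  have hsymm : E.symm (Pi.single p 1) =
      Submodule.Quotient.mk ⟨monomialVec p.2 p.1,
        monomialVec_mem_latticeAboveVec (mem_Ico.1 p.1.2).1 p.2⟩ := by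
    rw [LinearEquiv.symm_apply_eq, windowEquiv_mk, windowCoeffs_monomialVec]
  rw [Matrix.diag_apply, LinearMap.toMatrix'_apply, LinearEquiv.conj_apply, LinearMap.comp_apply,
    LinearMap.comp_apply, LinearEquiv.coe_coe, LinearEquiv.coe_coe, hsymm, windowMap_mk,
    windowEquiv_mk]
  rfl

end Window

section MatrixResidue

variable {K : Type*} [Field K] {n : ℕ} {f g : Matrix (Fin n) (Fin n) (LaurentSeries K)}

theorem tateOperator_monomialVec_coeff (i : Fin n) (m : ℤ) :
    (tateOperator f g (monomialVec i m) i).coeff m = ∑ j, tateDiag (g i j) (f j i) m := by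
  have hf : f *ᵥ monomialVec i m = fun j => f j i * HahnSeries.single m 1 := by
    funext j
    simp [monomialVec]
  have htrunc : ∀ F : Fin n → LaurentSeries K, trunc (∑ j, F j) = ∑ j, trunc (F j) :=
    fun F => map_sum (piPlus K) F univ
  simp only [tateOperator_apply, hf, Pi.sub_apply, piPlusVec_apply, mulVec, dotProduct, htrunc,
    ← sum_sub_distrib, HahnSeries.coeff_sum, tateDiag]

theorem sum_Ico_tateOperator_diag {A B : ℤ} (hf : ∀ i j, f i j ∈ latticeAbove K (1 - B))
    (hg : ∀ i j, g i j ∈ latticeAbove K A) (hA : A ≤ 0) (hB : 0 ≤ B) :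
    ∑ m ∈ Ico A B, ∑ i, (tateOperator f g (monomialVec i m) i).coeff m =
      (Matrix.trace (f * Matrix.of fun i j => lder (g i j))).coeff (-1) := by
  simp only [tateOperator_monomialVec_coeff, Matrix.trace, Matrix.diag, mul_apply, of_apply,
    HahnSeries.coeff_sum]
  calc ∑ m ∈ Ico A B, ∑ i, ∑ j, tateDiag (g i j) (f j i) m
      = ∑ i, ∑ j, ∑ m ∈ Ico A B, tateDiag (g i j) (f j i) m := by
        rw [sum_comm]
        exact sum_congr rfl fun i _ => sum_comm
    _ = ∑ i, ∑ j, (f j i * lder (g i j)).coeff (-1) :=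
        sum_congr rfl fun i _ => sum_congr rfl fun j _ => sum_tateDiag (hg i j) (hf j i) hA hB
    _ = ∑ i, ∑ j, (f i j * lder (g j i)).coeff (-1) := sum_comm

end MatrixResidue

theorem tate_trace_formula_matrix_general (K : Type*) [Field K] (n : ℕ)
    (f g : Matrix (Fin n) (Fin n) (LaurentSeries K))
    (u : (Fin n → LaurentSeries K) →ₗ[K] (Fin n → LaurentSeries K))
    (hu : u = piPlusVec K n ∘ₗ mulVecK g ∘ₗ mulVecK f -
      mulVecK g ∘ₗ piPlusVec K n ∘ₗ mulVecK f) :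
    (∃ a b : ℤ, a ≤ b ∧ (∀ h ∈ latticeAboveVec K n b, u h = 0) ∧
      (∀ h : Fin n → LaurentSeries K, u h ∈ latticeAboveVec K n a)) ∧
    (∀ a b : ℤ, a ≤ b → (∀ h ∈ latticeAboveVec K n b, u h = 0) →
      ∀ ha : (∀ h : Fin n → LaurentSeries K, u h ∈ latticeAboveVec K n a),
        FiniteDimensional K
          (↥(latticeAboveVec K n a) ⧸
            (latticeAboveVec K n b).comap (latticeAboveVec K n a).subtype) ∧
        ∃ e : (↥(latticeAboveVec K n a) ⧸
              (latticeAboveVec K n b).comap (latticeAboveVec K n a).subtype) →ₗ[K]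
            (↥(latticeAboveVec K n a) ⧸
              (latticeAboveVec K n b).comap (latticeAboveVec K n a).subtype),
          (∀ h : ↥(latticeAboveVec K n a),
            e (Submodule.Quotient.mk h) = Submodule.Quotient.mk ⟨u ↑h, ha ↑h⟩) ∧
          LinearMap.trace K
            (↥(latticeAboveVec K n a) ⧸
              (latticeAboveVec K n b).comap (latticeAboveVec K n a).subtype) e =
            (Matrix.trace (f * Matrix.of fun i j => lder (g i j))).coeff (-1)) := by
  obtain rfl : u = tateOperator f g := hu
  obtain ⟨c₀, hc₀, hf⟩ := exists_le_forall_mem_latticeAbove (Function.uncurry f) 0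
  obtain ⟨c, hc, hg⟩ := exists_le_forall_mem_latticeAbove (Function.uncurry g) c₀
  have hf' (i j : Fin n) : f i j ∈ latticeAbove K c := latticeAbove_antitone hc (hf (i, j))
  have hg' (i j : Fin n) : g i j ∈ latticeAbove K c := hg (i, j)
  refine ⟨⟨c, -2 * c, by omega, fun v hv => tateOperator_eq_zero_of_mem hf' hg' (by omega)
    (by omega) hv, tateOperator_mem hg' (by omega)⟩, fun a b _ hb ha => ?_⟩
  refine ⟨(windowEquiv a b).symm.finiteDimensional, windowMap _ ha hb, windowMap_mk _ ha hb, ?_⟩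
  rw [trace_windowMap, sum_Ico_diag_eq_of_le _ ha hb (min_le_left a c) (le_max_left b (1 - c))]
  exact sum_Ico_tateOperator_diag
    (fun i j => latticeAbove_antitone (by omega) (hf' i j))
    (fun i j => latticeAbove_antitone (min_le_right a c) (hg' i j)) (by omega) (by omega)

/-- **Tate's residue formula, matrix form.**  For `n × n` matrices `f, g` of Laurent
series and `π` the componentwise projection onto `K[[t]]ⁿ`, the operator
`u = π∘m_g∘m_f − m_g∘π∘m_f` kills `t^b K[[t]]ⁿ` and has image contained in
`t^a K[[t]]ⁿ` for suitable integers `a ≤ b`; and for any such `a ≤ b` the trace of the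
endomorphism induced by `u` on the finite-dimensional `K`-vector space
`t^a K[[t]]ⁿ / t^b K[[t]]ⁿ` equals `Res(Tr(f·g'))`. -/
theorem tate_trace_formula_matrix (K : Type*) [Field K] (n : ℕ) (hn : 1 ≤ n)
    (f g : Matrix (Fin n) (Fin n) (LaurentSeries K))
    (u : (Fin n → LaurentSeries K) →ₗ[K] (Fin n → LaurentSeries K))
    (hu : u = piPlusVec K n ∘ₗ mulVecK g ∘ₗ mulVecK f -
      mulVecK g ∘ₗ piPlusVec K n ∘ₗ mulVecK f) :
    (∃ a b : ℤ, a ≤ b ∧ (∀ h ∈ latticeAboveVec K n b, u h = 0) ∧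
      (∀ h : Fin n → LaurentSeries K, u h ∈ latticeAboveVec K n a)) ∧
    (∀ a b : ℤ, a ≤ b → (∀ h ∈ latticeAboveVec K n b, u h = 0) →
      ∀ ha : (∀ h : Fin n → LaurentSeries K, u h ∈ latticeAboveVec K n a),
        FiniteDimensional K
          (↥(latticeAboveVec K n a) ⧸
            (latticeAboveVec K n b).comap (latticeAboveVec K n a).subtype) ∧
        ∃ e : (↥(latticeAboveVec K n a) ⧸
              (latticeAboveVec K n b).comap (latticeAboveVec K n a).subtype) →ₗ[K]
            (↥(latticeAboveVec K n a) ⧸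
              (latticeAboveVec K n b).comap (latticeAboveVec K n a).subtype),
          (∀ h : ↥(latticeAboveVec K n a),
            e (Submodule.Quotient.mk h) = Submodule.Quotient.mk ⟨u ↑h, ha ↑h⟩) ∧
          LinearMap.trace K
            (↥(latticeAboveVec K n a) ⧸
              (latticeAboveVec K n b).comap (latticeAboveVec K n a).subtype) e =
            (Matrix.trace (f * Matrix.of fun i j => lder (g i j))).coeff (-1)) :=
  tate_trace_formula_matrix_general K n f g u hu
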